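/- Let μ: B → ℝ be continuously differentiable on an interval B, and let m₀, m₁ ∈ B with m₁ = E_{f₁}[M | M ∈ B] and m₀ = E_{f₀}[M | M ∈ B] for two conditional distributions on B. Assume μ is twice continuously differentiable with |μ''| ≤ L on B and B has width w. Then E_{f₁}[μ(M)|M∈B] − E_{f₀}[μ(M)|M∈B] = μ'(m₁)(m₁ − m₀) + R with |R| ≤ L w². -/

import Mathlib

/-!
Expand both expectations to first order around the same point `m₁`. A bound `L` on `μ''` makes
`μ'` `L`-Lipschitz, so the pointwise Taylor remainder `μ m - μ m₁ - μ'(m₁)(m - m₁)` is at most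
`L (m - m₁)² / 2 ≤ L w² / 2` on the bin; integrating, each expectation differs from its linear
approximation by at most `L w² / 2`. The linear term vanishes for `ν₁` because `m₁` is its mean,
and the difference of the two linear terms is `μ'(m₁)(m₁ - m₀)`.
-/

open MeasureTheory Set

theorem Convex.abs_sub_sub_mul_le_of_abs_deriv_sub_le {s : Set ℝ} {f f' : ℝ → ℝ} {L x y : ℝ}
    (hs : Convex ℝ s) (hf : ∀ z ∈ s, HasDerivWithinAt f (f' z) s z)
    (hf' : ∀ z ∈ s, |f' z - f' x| ≤ L * |z - x|) (hx : x ∈ s) (hy : y ∈ s) :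
    |f y - f x - f' x * (y - x)| ≤ L / 2 * (y - x) ^ 2 := by
  -- compare `g t = f (x + t (y - x)) - f x - t f' x (y - x)` with `L t² (y - x)² / 2` on `[0, 1]`
  set φ : ℝ → ℝ := fun t => x + t * (y - x)
  have hφs : MapsTo φ (Icc 0 1) s := fun t ht => by
    simpa [φ, smul_eq_mul] using hs.add_smul_sub_mem hx hy ht
  set g : ℝ → ℝ := fun t => f (φ t) - f x - t * (f' x * (y - x))
  have hg : ∀ t ∈ Icc (0 : ℝ) 1,
      HasDerivWithinAt g ((f' (φ t) - f' x) * (y - x)) (Icc 0 1) t := by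
    intro t ht
    have hφ : HasDerivWithinAt φ (y - x) (Icc 0 1) t :=
      ((((hasDerivAt_id' t).mul_const (y - x)).const_add x).hasDerivWithinAt).congr_deriv
        (one_mul _)
    have := (((hf _ (hφs ht)).comp t hφ hφs).sub_const (f x)).sub
      ((hasDerivAt_mul_const (f' x * (y - x))).hasDerivWithinAt)
    exact this.congr_deriv (by ring)
  have hB : ∀ t, HasDerivAt (fun t => L / 2 * t ^ 2 * (y - x) ^ 2) (L * t * (y - x) ^ 2) t :=
    fun t => (((hasDerivAt_pow 2 t).const_mul (L / 2)).mul_const _).congr_deriv (by ring)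
  have key := image_norm_le_of_norm_deriv_right_le_deriv_boundary
    (fun t ht => (hg t ht).continuousWithinAt)
    (fun t ht => (hg t (Ico_subset_Icc_self ht)).mono_of_mem_nhdsWithin
      (Filter.mem_of_superset (Icc_mem_nhdsGE ht.2) (Icc_subset_Icc_left ht.1)))
    (by simp [g, φ]) hB
    (fun t ht => by
      have hdist := hf' _ (hφs (Ico_subset_Icc_self ht))
      rw [show φ t - x = t * (y - x) by simp [φ], abs_mul, abs_of_nonneg ht.1] at hdist
      rw [Real.norm_eq_abs, abs_mul, ← sq_abs (y - x)]
      nlinarith [abs_nonneg (y - x)])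
    (right_mem_Icc.2 zero_le_one)
  simpa [g, φ] using key

theorem Convex.abs_derivWithin_sub_le_of_abs_iteratedDerivWithin_two_le {s : Set ℝ} {f : ℝ → ℝ}
    {L x y : ℝ} (hs : Convex ℝ s) (hus : UniqueDiffOn ℝ s) (hf : ContDiffOn ℝ 2 f s)
    (hL : ∀ z ∈ s, |iteratedDerivWithin 2 f s z| ≤ L) (hx : x ∈ s) (hy : y ∈ s) :
    |derivWithin f s y - derivWithin f s x| ≤ L * |y - x| := by
  rw [iteratedDerivWithin_succ, iteratedDerivWithin_one] at hL
  exact hs.norm_image_sub_le_of_norm_derivWithin_le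
    ((hf.derivWithin hus (m := 1) (by norm_num)).differentiableOn one_ne_zero) hL hx hy

theorem abs_sub_sub_derivWithin_mul_le_of_abs_iteratedDerivWithin_two_le {c d L x y : ℝ}
    {f : ℝ → ℝ} (hf : ContDiffOn ℝ 2 f (Icc c d))
    (hL : ∀ z ∈ Icc c d, |iteratedDerivWithin 2 f (Icc c d) z| ≤ L)
    (hx : x ∈ Icc c d) (hy : y ∈ Icc c d) :
    |f y - f x - derivWithin f (Icc c d) x * (y - x)| ≤ L / 2 * (y - x) ^ 2 := by
  rcases (hx.1.trans hx.2).eq_or_lt with rfl | hcd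
  · obtain rfl : y = x := by simp_all
    simp
  · exact (convex_Icc c d).abs_sub_sub_mul_le_of_abs_deriv_sub_le
      (fun z hz => (hf.differentiableOn (by norm_num) z hz).hasDerivWithinAt)
      (fun z hz => (convex_Icc c d).abs_derivWithin_sub_le_of_abs_iteratedDerivWithin_two_le
        (uniqueDiffOn_Icc hcd) hf hL hx hz) hx hy

theorem ContinuousOn.integrable_of_ae_mem {X E : Type*} [TopologicalSpace X] [T2Space X]
    [MeasurableSpace X] [OpensMeasurableSpace X] [NormedAddCommGroup E] {ν : Measure X}
    [IsFiniteMeasureOnCompacts ν] {K : Set X} {f : X → E} (hf : ContinuousOn f K)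
    (hK : IsCompact K) (hν : ∀ᵐ x ∂ν, x ∈ K) : Integrable f ν := by
  rw [← Measure.restrict_eq_self_of_ae_mem hν]
  exact hf.integrableOn_compact hK

theorem abs_integral_sub_sub_derivWithin_mul_le {c d L a : ℝ} {f : ℝ → ℝ} {ν : Measure ℝ}
    [IsProbabilityMeasure ν] (hν : ∀ᵐ m ∂ν, m ∈ Icc c d) (hf : ContDiffOn ℝ 2 f (Icc c d))
    (hL : ∀ z ∈ Icc c d, |iteratedDerivWithin 2 f (Icc c d) z| ≤ L) (ha : a ∈ Icc c d) :
    |(∫ m, f m ∂ν) - f a - derivWithin f (Icc c d) a * ((∫ m, m ∂ν) - a)|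
      ≤ L / 2 * (d - c) ^ 2 := by
  set F := derivWithin f (Icc c d) a
  have hfi : Integrable f ν := hf.continuousOn.integrable_of_ae_mem isCompact_Icc hν
  have hidi : Integrable (fun m : ℝ => m) ν :=
    continuousOn_id.integrable_of_ae_mem isCompact_Icc hν
  have hlin : (∫ m, f m ∂ν) - f a - F * ((∫ m, m ∂ν) - a)
      = ∫ m, (f m - f a - F * (m - a)) ∂ν := by
    have hfa : Integrable (fun m => f m - f a) ν := hfi.sub (integrable_const _)
    have hida : Integrable (fun m => F * (m - a)) ν := (hidi.sub (integrable_const _)).const_mul F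
    rw [integral_sub hfa hida, integral_sub hfi (integrable_const _), integral_const_mul,
      integral_sub hidi (integrable_const _)]
    simp
  have hpoint : ∀ᵐ m ∂ν, ‖f m - f a - F * (m - a)‖ ≤ L / 2 * (d - c) ^ 2 := by
    filter_upwards [hν] with m hm
    have hL0 : 0 ≤ L := (abs_nonneg _).trans (hL a ha)
    have hma : (m - a) ^ 2 ≤ (d - c) ^ 2 := by nlinarith [hm.1, hm.2, ha.1, ha.2]
    calc ‖f m - f a - F * (m - a)‖ ≤ L / 2 * (m - a) ^ 2 :=
          abs_sub_sub_derivWithin_mul_le_of_abs_iteratedDerivWithin_two_le hf hL ha hm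
      _ ≤ L / 2 * (d - c) ^ 2 := by gcongr
  rw [hlin]
  simpa [Real.norm_eq_abs] using norm_integral_le_of_norm_le_const hpoint

theorem stmt8_general (c d L : ℝ)
    (ν₀ ν₁ : Measure ℝ) [IsProbabilityMeasure ν₀] [IsProbabilityMeasure ν₁]
    (h₀ : ν₀ (Set.Icc c d)ᶜ = 0) (h₁ : ν₁ (Set.Icc c d)ᶜ = 0)
    (m₀ m₁ : ℝ) (hm₀ : m₀ = ∫ m, m ∂ν₀) (hm₁ : m₁ = ∫ m, m ∂ν₁)
    (μ : ℝ → ℝ) (hC2 : ContDiffOn ℝ 2 μ (Set.Icc c d))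
    (hL : ∀ m ∈ Set.Icc c d, |iteratedDerivWithin 2 μ (Set.Icc c d) m| ≤ L) :
    ∃ R : ℝ,
      (∫ m, μ m ∂ν₁) - (∫ m, μ m ∂ν₀)
        = derivWithin μ (Set.Icc c d) m₁ * (m₁ - m₀) + R ∧
      |R| ≤ L * (d - c) ^ 2 := by
  have hν₀ : ∀ᵐ m ∂ν₀, m ∈ Icc c d := mem_ae_iff.2 h₀
  have hν₁ : ∀ᵐ m ∂ν₁, m ∈ Icc c d := mem_ae_iff.2 h₁
  have hm₁_mem : m₁ ∈ Icc c d := hm₁ ▸ (convex_Icc c d).integral_mem isClosed_Icc hν₁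
    (continuousOn_id.integrable_of_ae_mem isCompact_Icc hν₁)
  have e₁ := abs_integral_sub_sub_derivWithin_mul_le hν₁ hC2 hL hm₁_mem
  have e₀ := abs_integral_sub_sub_derivWithin_mul_le hν₀ hC2 hL hm₁_mem
  rw [← hm₁] at e₁
  rw [← hm₀] at e₀
  refine ⟨(∫ m, μ m ∂ν₁) - (∫ m, μ m ∂ν₀) - derivWithin μ (Icc c d) m₁ * (m₁ - m₀),
    by ring, ?_⟩
  calc _ = |((∫ m, μ m ∂ν₁) - μ m₁ - derivWithin μ (Icc c d) m₁ * (m₁ - m₁))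
        - ((∫ m, μ m ∂ν₀) - μ m₁ - derivWithin μ (Icc c d) m₁ * (m₀ - m₁))| := by
        congr 1; ring
    _ ≤ _ := abs_sub _ _
    _ ≤ L * (d - c) ^ 2 := by linarith

/-- Equation (6): first-order expansion of the within-bin bias with
second-order remainder. -/
theorem stmt8 (c d L : ℝ) (hcd : c ≤ d)
    (ν₀ ν₁ : Measure ℝ) [IsProbabilityMeasure ν₀] [IsProbabilityMeasure ν₁]
    (h₀ : ν₀ (Set.Icc c d)ᶜ = 0) (h₁ : ν₁ (Set.Icc c d)ᶜ = 0)
    (m₀ m₁ : ℝ) (hm₀ : m₀ = ∫ m, m ∂ν₀) (hm₁ : m₁ = ∫ m, m ∂ν₁)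
    (μ : ℝ → ℝ) (hC2 : ContDiffOn ℝ 2 μ (Set.Icc c d))
    (hL : ∀ m ∈ Set.Icc c d, |iteratedDerivWithin 2 μ (Set.Icc c d) m| ≤ L) :
    ∃ R : ℝ,
      (∫ m, μ m ∂ν₁) - (∫ m, μ m ∂ν₀)
        = derivWithin μ (Set.Icc c d) m₁ * (m₁ - m₀) + R ∧
      |R| ≤ L * (d - c) ^ 2 :=
  stmt8_general c d L ν₀ ν₁ h₀ h₁ m₀ m₁ hm₀ hm₁ μ hC2 hL
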